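/- arXiv:1304.7963 — 2 statements merged into one kernel-verified Lean document; each statement's English description precedes it below -/
import Mathlib

section
/- Let X be a nonempty compact metric space and μ a finite Borel measure on X with full support (μ(U) > 0 for every nonempty open U ⊆ X). Let u, w : X → ℝ be continuous with min u = 0, max u = l > 0 and min w = 0, and suppose argmin(u) ∩ argmin(w) ≠ ∅. For t ∈ [0,1] set h_t := min(t·l, u) + w (pointwise minimum with the constant t·l) and g(t) := ∫_X normalize(h_t) dμ. Then: (a) min h_t = 0 for all t ∈ [0,1]; (b) argmin(h_t) = argmin(u) ∩ argmin(w) for all t ∈ (0,1]; (c) g(t) = ∫_X min(t·l, u) dμ + ∫_X w dμ for all t ∈ [0,1] and g is strictly increasing on [0,1]; (d) t ↦ osc(h_t) is monotone nondecreasing on [0,1]. -/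
open MeasureTheory Set

/-- The (attained) minimum of `f` on a nonempty compact space. -/
noncomputable def minF {X : Type*} (f : X → ℝ) : ℝ := sInf (Set.range f)

/-- The (attained) maximum of `f` on a nonempty compact space. -/
noncomputable def maxF {X : Type*} (f : X → ℝ) : ℝ := sSup (Set.range f)

/-- The oscillation `max f - min f`. -/
noncomputable def oscF {X : Type*} (f : X → ℝ) : ℝ := maxF f - minF f

/-- `normalize f = f - min f`. -/
noncomputable def normF {X : Type*} (f : X → ℝ) : X → ℝ := fun x => f x - minF f

/-- The minimizer set of `f`. -/
def argminF {X : Type*} (f : X → ℝ) : Set X := {x | f x = minF f}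

/-- The maximizer set of `f`. -/
def argmaxF {X : Type*} (f : X → ℝ) : Set X := {x | f x = maxF f}

/-!
Since `u` and `w` are nonnegative and vanish at a common point, every `h_t` is nonnegative with
minimum `0`, attained exactly where both `u` and `w` vanish once the truncation level `t * l` is
positive. Hence `normalize(h_t) = h_t`, and both `g(t)` and `max h_t` are monotone because
`h_t` is pointwise monotone in `t`. Strictness of `g` comes from a maximum point `x₁` of `u`:
there `min (s * l) (u x₁) < min (t * l) (u x₁)` for `s < t ≤ 1`, and a continuous nonnegative
function that is nonzero somewhere has positive integral against a measure of full support.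
-/

section MinMax

variable {X : Type*}

theorem minF_eq_of_forall_le {f : X → ℝ} {c : ℝ} (hle : ∀ x, c ≤ f x) {x₀ : X}
    (hx₀ : f x₀ = c) : minF f = c :=
  IsLeast.csInf_eq ⟨⟨x₀, hx₀⟩, forall_mem_range.2 hle⟩

theorem minF_le {f : X → ℝ} (hf : BddBelow (range f)) (x : X) : minF f ≤ f x :=
  csInf_le hf ⟨x, rfl⟩

theorem maxF_mono {f g : X → ℝ} (hg : BddAbove (range g)) (hle : ∀ x, f x ≤ g x) :
    maxF f ≤ maxF g :=
  ciSup_mono hg hle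

theorem normF_eq_self {f : X → ℝ} (hf : minF f = 0) : normF f = f := by
  funext x
  simp [normF, hf]

theorem exists_eq_maxF [TopologicalSpace X] [CompactSpace X] [Nonempty X] {f : X → ℝ}
    (hf : Continuous f) : ∃ x, f x = maxF f :=
  (isCompact_range hf).sSup_mem (range_nonempty f)

end MinMax

section TruncatedSum

variable {X : Type*} {u w : X → ℝ} {c : ℝ}

theorem minF_min_add_eq_zero (hu : ∀ x, 0 ≤ u x) (hw : ∀ x, 0 ≤ w x) (hc : 0 ≤ c) {x₀ : X}
    (hux₀ : u x₀ = 0) (hwx₀ : w x₀ = 0) : minF (fun x => min c (u x) + w x) = 0 :=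
  minF_eq_of_forall_le (fun x => add_nonneg (le_min hc (hu x)) (hw x))
    (x₀ := x₀) (by simp [hux₀, hwx₀, hc])

theorem min_add_eq_zero_iff {a b : ℝ} (hc : 0 < c) (ha : 0 ≤ a) (hb : 0 ≤ b) :
    min c a + b = 0 ↔ a = 0 ∧ b = 0 := by
  rw [add_eq_zero_iff_of_nonneg (le_min hc.le ha) hb, min_eq_iff]
  constructor
  · rintro ⟨⟨hc0, -⟩ | ⟨ha0, -⟩, hb0⟩
    · exact absurd hc0 hc.ne'
    · exact ⟨ha0, hb0⟩
  · rintro ⟨ha0, hb0⟩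
    exact ⟨Or.inr ⟨ha0, ha0 ▸ hc.le⟩, hb0⟩

theorem min_add_mono {c d : ℝ} (hcd : c ≤ d) (x : X) :
    min c (u x) + w x ≤ min d (u x) + w x :=
  add_le_add_left (min_le_min_right _ hcd) _

end TruncatedSum

section Integral

variable {X : Type*} [TopologicalSpace X] [MeasurableSpace X] {μ : Measure X}

theorem Continuous.integrable_of_compactSpace [OpensMeasurableSpace X] [CompactSpace X]
    [IsFiniteMeasure μ] {f : X → ℝ} (hf : Continuous f) : Integrable f μ :=
  hf.integrable_of_hasCompactSupport (HasCompactSupport.of_compactSpace f)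

theorem integral_lt_integral_of_continuous_of_le [μ.IsOpenPosMeasure] {f g : X → ℝ}
    (hf : Continuous f) (hg : Continuous g) (hfi : Integrable f μ) (hgi : Integrable g μ)
    (hle : ∀ x, f x ≤ g x) {x₀ : X} (hlt : f x₀ < g x₀) : ∫ x, f x ∂μ < ∫ x, g x ∂μ := by
  have hpos : 0 < ∫ x, (g x - f x) ∂μ :=
    integral_pos_of_integrable_nonneg_nonzero (hg.sub hf) (hgi.sub hfi)
      (fun x => sub_nonneg.2 (hle x)) (sub_ne_zero.2 hlt.ne')
  rw [integral_sub hgi hfi] at hpos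
  linarith

theorem strictMonoOn_integral_min [OpensMeasurableSpace X] [CompactSpace X] [Nonempty X]
    [IsFiniteMeasure μ] [μ.IsOpenPosMeasure] {u : X → ℝ} (hu : Continuous u) :
    StrictMonoOn (fun c => ∫ x, min c (u x) ∂μ) (Iic (maxF u)) := by
  intro c _ d hd hcd
  obtain ⟨x₁, hx₁⟩ := exists_eq_maxF hu
  have hcont : ∀ a : ℝ, Continuous fun x => min a (u x) := fun a => continuous_const.min hu
  refine integral_lt_integral_of_continuous_of_le (hcont c) (hcont d)
    (hcont c).integrable_of_compactSpace (hcont d).integrable_of_compactSpace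
    (fun x => min_le_min_right _ hcd.le) (x₀ := x₁) ?_
  rw [min_eq_left (hx₁ ▸ hd : d ≤ u x₁)]
  exact min_lt_of_left_lt hcd

end Integral

theorem stmt_6 {X : Type*} [MetricSpace X] [CompactSpace X] [Nonempty X]
    [MeasurableSpace X] [BorelSpace X]
    (μ : Measure X) [IsFiniteMeasure μ]
    (hfull : ∀ U : Set X, IsOpen U → U.Nonempty → 0 < μ U)
    (u w : X → ℝ) (hu : Continuous u) (hw : Continuous w)
    (l : ℝ) (hl : 0 < l) (humin : minF u = 0) (humax : maxF u = l)
    (hwmin : minF w = 0)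
    (hinter : (argminF u ∩ argminF w).Nonempty) :
    (∀ t ∈ Set.Icc (0:ℝ) 1, minF (fun x => min (t * l) (u x) + w x) = 0) ∧
    (∀ t ∈ Set.Ioc (0:ℝ) 1,
      argminF (fun x => min (t * l) (u x) + w x) = argminF u ∩ argminF w) ∧
    (∀ t ∈ Set.Icc (0:ℝ) 1,
      (∫ x, normF (fun x => min (t * l) (u x) + w x) x ∂μ) =
        (∫ x, min (t * l) (u x) ∂μ) + ∫ x, w x ∂μ) ∧
    StrictMonoOn
      (fun t => ∫ x, normF (fun x => min (t * l) (u x) + w x) x ∂μ)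
      (Set.Icc (0:ℝ) 1) ∧
    MonotoneOn (fun t => oscF (fun x => min (t * l) (u x) + w x))
      (Set.Icc (0:ℝ) 1) := by
  have : μ.IsOpenPosMeasure := ⟨fun U hU hne => (hfull U hU hne).ne'⟩
  obtain ⟨x₀, hux₀ : u x₀ = minF u, hwx₀ : w x₀ = minF w⟩ := hinter
  rw [humin] at hux₀
  rw [hwmin] at hwx₀
  have hu0 : ∀ x, 0 ≤ u x := humin ▸ minF_le (isCompact_range hu).bddBelow
  have hw0 : ∀ x, 0 ≤ w x := hwmin ▸ minF_le (isCompact_range hw).bddBelow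
  have hmin : ∀ t ∈ Icc (0:ℝ) 1, minF (fun x => min (t * l) (u x) + w x) = 0 := fun t ht =>
    minF_min_add_eq_zero hu0 hw0 (mul_nonneg ht.1 hl.le) hux₀ hwx₀
  have hint : ∀ t ∈ Icc (0:ℝ) 1, (∫ x, normF (fun x => min (t * l) (u x) + w x) x ∂μ) =
      (∫ x, min (t * l) (u x) ∂μ) + ∫ x, w x ∂μ := fun t ht => by
    rw [normF_eq_self (hmin t ht)]
    exact integral_add (continuous_const.min hu).integrable_of_compactSpace
      hw.integrable_of_compactSpace
  refine ⟨hmin, fun t ht => ?_, hint, fun s hs t ht hst => ?_, fun s hs t ht hst => ?_⟩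
  · ext x
    simp only [argminF, mem_ofPred_eq, mem_inter_iff, hmin t (Ioc_subset_Icc_self ht), humin,
      hwmin, min_add_eq_zero_iff (mul_pos ht.1 hl) (hu0 x) (hw0 x)]
  · have hmaps : ∀ r ∈ Icc (0:ℝ) 1, r * l ∈ Iic (maxF u) := fun r hr =>
      humax ▸ mul_le_of_le_one_left hl.le hr.2
    simp only [hint s hs, hint t ht, add_lt_add_iff_right]
    exact strictMonoOn_integral_min hu (hmaps s hs) (hmaps t ht)
      (mul_lt_mul_of_pos_right hst hl)
  · simp only [oscF, hmin s hs, hmin t ht, sub_zero]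
    exact maxF_mono (isCompact_range (continuous_const.min hu |>.add hw)).bddAbove
      (min_add_mono (mul_le_mul_of_nonneg_right hst hl.le))
end

section
/- Let X be a nonempty compact metric space and p, q : X → ℝ continuous with p ≥ 0, q ≥ 0, min p = 0 and min q = 0. Then argmax(p) ∪ argmin(q) = X if and only if p(x) = min(max p, p(x) + q(x)) for every x ∈ X. -/
open MeasureTheory Set

theorem le_maxF {X : Type*} {f : X → ℝ} (hf : BddAbove (Set.range f)) (x : X) :
    f x ≤ maxF f :=
  le_csSup hf ⟨x, rfl⟩

theorem eq_min_add_iff {α : Type*} [AddCommGroup α] [LinearOrder α] [IsOrderedAddMonoid α]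
    {a m b : α} (ham : a ≤ m) (hb : 0 ≤ b) : a = min m (a + b) ↔ a = m ∨ b = 0 := by
  rcases ham.eq_or_lt with rfl | ham
  · simp [hb]
  · rw [min_def]
    split_ifs with h
    · have hb0 : b ≠ 0 := by
        rintro rfl
        exact ham.not_ge (by simpa using h)
      simp [ham.ne, hb0]
    · simp [ham.ne]

theorem stmt_11_general {X : Type*} [MetricSpace X] [CompactSpace X]
    (p q : X → ℝ) (hp : Continuous p)
    (hq0 : ∀ x, 0 ≤ q x)
    (hqmin : minF q = 0) :
    (argmaxF p ∪ argminF q) = Set.univ ↔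
      ∀ x : X, p x = min (maxF p) (p x + q x) := by
  have hle := le_maxF (isCompact_range hp).bddAbove
  simp only [Set.eq_univ_iff_forall, Set.mem_union, argmaxF, argminF, Set.mem_ofPred_eq, hqmin]
  exact forall_congr' fun x => (eq_min_add_iff (hle x) (hq0 x)).symm

theorem stmt_11 {X : Type*} [MetricSpace X] [CompactSpace X] [Nonempty X]
    (p q : X → ℝ) (hp : Continuous p) (hq : Continuous q)
    (hp0 : ∀ x, 0 ≤ p x) (hq0 : ∀ x, 0 ≤ q x)
    (hpmin : minF p = 0) (hqmin : minF q = 0) :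
    (argmaxF p ∪ argminF q) = Set.univ ↔
      ∀ x : X, p x = min (maxF p) (p x + q x) :=
  stmt_11_general p q hp hq0 hqmin
end
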